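/- arXiv:1010.2902 — 3 statements merged into one kernel-verified Lean document; each statement's English description precedes it below -/
import Mathlib

section
/- For each n ≥ 1, the Tutte polynomial of the Schreier graph Γ_n of the Grigorchuk group is T_n(x, y) = y^{2^n + 4} · x^{2^{n−1}} · (y + x)^{2^{n−1} − 1}. -/
/-- A finite multigraph on a vertex set `V`: a finite edge type together with an
incidence map assigning to each edge its unordered pair of endpoints
(loops and parallel edges are allowed). -/
structure Multigraph (V : Type) where
  /-- the type of edges -/
  Edge : Type
  /-- the edge type is finite -/
  fintypeEdge : Fintype Edge
  /-- equality of edges is decidable -/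
  decEqEdge : DecidableEq Edge
  /-- the unordered pair of endpoints of an edge -/
  inc : Edge → Sym2 V

attribute [instance] Multigraph.fintypeEdge Multigraph.decEqEdge

namespace Multigraph

variable {V : Type} [Fintype V] [DecidableEq V]

/-- The simple graph underlying the spanning subgraph of `G` with edge set `A`:
two distinct vertices are adjacent iff some edge in `A` has them as endpoints. -/
def toSimple (G : Multigraph V) (A : Finset G.Edge) : SimpleGraph V :=
  SimpleGraph.fromRel fun u v => ∃ e ∈ A, G.inc e = s(u, v)

/-- `G.comps A` is the number `k(A)` of connected components of the spanning
subgraph of `G` with edge set `A`. -/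
noncomputable def comps (G : Multigraph V) (A : Finset G.Edge) : ℕ :=
  Nat.card (G.toSimple A).ConnectedComponent

/-- The rank `r(A) = |V| - k(A)` of the spanning subgraph with edge set `A`. -/
noncomputable def rk (G : Multigraph V) (A : Finset G.Edge) : ℕ :=
  Fintype.card V - G.comps A

/-- The nullity `n(A) = |E(A)| - r(A)` of the spanning subgraph with edge set `A`. -/
noncomputable def nullity (G : Multigraph V) (A : Finset G.Edge) : ℕ :=
  A.card - G.rk A

/-- The Tutte polynomial
`T(G; x, y) = ∑_{A ⊆ E} (x - 1) ^ (r(E) - r(A)) * (y - 1) ^ n(A)`,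
as a function of two real variables. -/
noncomputable def tutte (G : Multigraph V) (x y : ℝ) : ℝ :=
  ∑ A ∈ (Finset.univ : Finset G.Edge).powerset,
    (x - 1) ^ (G.rk Finset.univ - G.rk A) * (y - 1) ^ (G.nullity A)

/-- The reliability polynomial `R(G, p)`: the probability that, when each edge is
independently active with probability `p`, every pair of vertices is joined by a
path of active edges (i.e. the spanning subgraph of active edges is connected). -/
noncomputable def reliability (G : Multigraph V) (p : ℝ) : ℝ :=
  ∑ A ∈ (Finset.univ : Finset G.Edge).powerset,
    if G.comps A = 1 then p ^ A.card * (1 - p) ^ (Fintype.card G.Edge - A.card) else 0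

/-- The complexity `τ(G)`: the number of spanning subtrees of `G`, i.e. spanning
subgraphs which are connected and have `|V| - 1` edges. -/
noncomputable def treeCount (G : Multigraph V) : ℕ :=
  Nat.card {A : Finset G.Edge // G.comps A = 1 ∧ A.card + 1 = Fintype.card V}

/-- The number of connected spanning subgraphs of `G`. -/
noncomputable def connCount (G : Multigraph V) : ℕ :=
  Nat.card {A : Finset G.Edge // G.comps A = 1}

/-- The number of spanning forests of `G`: spanning subgraphs containing no cycle,
i.e. with `|E(A)| = |V| - k(A)` (zero nullity). -/
noncomputable def forestCount (G : Multigraph V) : ℕ :=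
  Nat.card {A : Finset G.Edge // A.card + G.comps A = Fintype.card V}

/-- `σ` is an orientation of `G` if it assigns to every edge an ordered pair of
vertices whose underlying unordered pair is the pair of endpoints of the edge. -/
def IsOrientation (G : Multigraph V) (σ : G.Edge → V × V) : Prop :=
  ∀ e, s((σ e).1, (σ e).2) = G.inc e

/-- The number of acyclic orientations of `G`: orientations admitting no directed
cycle. -/
noncomputable def acyclicOrientationCount (G : Multigraph V) : ℕ :=
  Nat.card {σ : G.Edge → V × V //
    G.IsOrientation σ ∧ ∀ v : V, ¬ Relation.TransGen (fun u w => ∃ e, σ e = (u, w)) v v}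

/-- A proper coloring of `G`: the two endpoints of every edge receive distinct
colors. -/
def ProperColoring (G : Multigraph V) {α : Type} (c : V → α) : Prop :=
  ∀ e, ¬ (Sym2.map c (G.inc e)).IsDiag

/-- The number of proper colorings of `G` with `k` colors (the value `χ(G, k)` of
the chromatic polynomial at the natural number `k`). -/
noncomputable def chromCount (G : Multigraph V) (k : ℕ) : ℕ :=
  Nat.card {c : V → Fin k // G.ProperColoring c}

end Multigraph

/-- The left endpoint of the `i`-th gap of a path on `2^n` vertices. -/
def leftV (n : ℕ) (i : Fin (2 ^ n - 1)) : Fin (2 ^ n) :=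
  ⟨i.val, by have := i.isLt; omega⟩

/-- The right endpoint of the `i`-th gap of a path on `2^n` vertices. -/
def rightV (n : ℕ) (i : Fin (2 ^ n - 1)) : Fin (2 ^ n) :=
  ⟨i.val + 1, by have := i.isLt; omega⟩

/-- The vertex carrying the `j`-th extra loop: the two outermost vertices carry
two extra loops each. -/
def endV (n : ℕ) (j : Fin 4) : Fin (2 ^ n) :=
  if j.val < 2 then ⟨0, by positivity⟩
  else
    ⟨2 ^ n - 1, by
      have h : 0 < 2 ^ n := by positivity
      omega⟩

/-- The level-`n` Schreier graph `Γ_n` of the Grigorchuk group, as an unlabelled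
multigraph: the path-shaped cactus on `2^n` vertices obtained by alternating
`2^(n-1)` bridges (single edges, at even gaps) and `2^(n-1) - 1` cycles of length
two (double edges, at odd gaps), with one loop at every vertex and two extra loops
at each of the two outermost vertices (which therefore carry three loops each). -/
def grig (n : ℕ) : Multigraph (Fin (2 ^ n)) where
  Edge := (Σ i : Fin (2 ^ n - 1), Fin (if Even i.val then 1 else 2)) ⊕ (Fin (2 ^ n) ⊕ Fin 4)
  fintypeEdge := inferInstance
  decEqEdge := inferInstance
  inc := fun e =>
    match e with
    | Sum.inl ⟨i, _⟩ => s(leftV n i, rightV n i)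
    | Sum.inr (Sum.inl v) => s(v, v)
    | Sum.inr (Sum.inr j) => s(endV n j, endV n j)

/-!
Every non-loop edge of `Γ_n` joins two consecutive vertices of the path, so a spanning subgraph
`A` has rank equal to the number of gaps `{k, k + 1}` it meets, and loops only add to its nullity.
The Tutte sum therefore factors over the gaps and the loops: a gap carrying a class of `m`
parallel edges contributes `(x - 1) + ∑_{∅ ≠ s} (y - 1) ^ (|s| - 1)`, which is `x` for a bridge
and `x + y` for a cycle of length two, and each of the `2^n + 4` loops contributes `y`.
-/

open Finset

lemma Finset.image_range_eq_range_of_succ_le {f : ℕ → ℕ} (h0 : f 0 = 0)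
    (hstep : ∀ k, f k ≤ f (k + 1) ∧ f (k + 1) ≤ f k + 1) (N : ℕ) :
    (range (N + 1)).image f = range (f N + 1) := by
  induction N with
  | zero => simp [h0]
  | succ N ih =>
    rw [range_add_one, image_insert, ih]
    obtain ⟨h1, h2⟩ := hstep N
    rcases Nat.lt_or_eq_of_le h1 with h | h
    · rw [show f (N + 1) = f N + 1 by omega, ← range_add_one]
    · rw [← h, insert_eq_of_mem (self_mem_range_succ _)]

namespace SimpleGraph

def pathSubgraph (N : ℕ) (s : Finset (Fin (N - 1))) : SimpleGraph (Fin N) :=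
  fromRel fun u v => ∃ i ∈ s, (i : ℕ) = u ∧ (i : ℕ) + 1 = v

variable {N : ℕ} {s : Finset (Fin (N - 1))}

/-- The number of gaps `{k, k + 1}` with `k < v` that are missing from `pathSubgraph N s`;
it indexes the connected components. -/
def missingGapsBelow (s : Finset (Fin (N - 1))) (v : ℕ) : ℕ :=
  Nat.count (· ∉ s.map Fin.valEmbedding) v

lemma missingGapsBelow_succ (s : Finset (Fin (N - 1))) (v : ℕ) :
    missingGapsBelow s v ≤ missingGapsBelow s (v + 1) ∧
      missingGapsBelow s (v + 1) ≤ missingGapsBelow s v + 1 := by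
  unfold missingGapsBelow
  rw [Nat.count_succ]
  split <;> omega

lemma missingGapsBelow_succ_eq_iff {v : ℕ} :
    missingGapsBelow s (v + 1) = missingGapsBelow s v ↔ ∃ i ∈ s, (i : ℕ) = v := by
  simp [missingGapsBelow, Nat.count_succ_eq_count_iff]

lemma missingGapsBelow_monotone (s : Finset (Fin (N - 1))) : Monotone (missingGapsBelow s) :=
  Nat.count_monotone _

lemma pathSubgraph_reachable_of_le {u v : Fin N} (huv : (u : ℕ) ≤ v)
    (h : missingGapsBelow s u = missingGapsBelow s v) : (pathSubgraph N s).Reachable u v := by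
  suffices ∀ k, (u : ℕ) ≤ k → ∀ hk : k < N, k ≤ v → (pathSubgraph N s).Reachable u ⟨k, hk⟩ from
    this v huv v.isLt le_rfl
  intro k hu
  induction k, hu using Nat.le_induction with
  | base => exact fun _ _ => .rfl
  | succ k huk ih =>
    intro hk hv
    have hk_const : missingGapsBelow s (k + 1) = missingGapsBelow s k := by
      have := missingGapsBelow_monotone s huk
      have := missingGapsBelow_monotone s hv
      have := missingGapsBelow_succ s k
      omega
    obtain ⟨i, hi, hik⟩ := missingGapsBelow_succ_eq_iff.1 hk_const
    refine (ih (by omega) (by omega)).trans (Adj.reachable ?_)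
    exact (fromRel_adj _ _ _).2 ⟨by simp, .inl ⟨i, hi, hik, by simp [hik]⟩⟩

lemma pathSubgraph_reachable_iff {u v : Fin N} :
    (pathSubgraph N s).Reachable u v ↔ missingGapsBelow s u = missingGapsBelow s v := by
  constructor
  · rintro ⟨w⟩
    induction w with
    | nil => rfl
    | cons h _ ih =>
      refine Eq.trans ?_ ih
      obtain ⟨-, ⟨i, hi, hu, hv⟩ | ⟨i, hi, hu, hv⟩⟩ := (fromRel_adj _ _ _).1 h <;>
        rw [← hu, ← hv, missingGapsBelow_succ_eq_iff.2 ⟨i, hi, rfl⟩]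
  · intro h
    rcases le_total (u : ℕ) v with huv | hvu
    · exact pathSubgraph_reachable_of_le huv h
    · exact (pathSubgraph_reachable_of_le hvu h.symm).symm

theorem card_connectedComponent_pathSubgraph (hN : 0 < N) :
    Nat.card (pathSubgraph N s).ConnectedComponent = N - #s := by
  let index : (pathSubgraph N s).ConnectedComponent → ℕ :=
    ConnectedComponent.lift (fun v => missingGapsBelow s v)
      fun _ _ p _ => pathSubgraph_reachable_iff.1 p.reachable
  have index_injective : Function.Injective index := by
    refine ConnectedComponent.ind₂ fun u v h => ConnectedComponent.sound ?_
    exact pathSubgraph_reachable_iff.2 h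
  have range_index : Set.range index = range (missingGapsBelow s (N - 1) + 1) := by
    rw [← image_range_eq_range_of_succ_le (by simp [missingGapsBelow]) (missingGapsBelow_succ s),
      Nat.sub_add_cancel hN, coe_image, coe_range, ← Fin.range_val, ← Set.range_comp]
    ext c
    constructor
    · rintro ⟨C, rfl⟩
      induction C using ConnectedComponent.ind with | h v => exact ⟨v, rfl⟩
    · rintro ⟨v, rfl⟩
      exact ⟨connectedComponentMk _ v, rfl⟩
  have missing_add_card : missingGapsBelow s (N - 1) + #s = N - 1 := by
    have hs : {k ∈ range (N - 1) | k ∈ s.map Fin.valEmbedding} = s.map Fin.valEmbedding := by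
      ext k
      simpa using fun i _ hik => hik ▸ i.isLt
    have := card_filter_add_card_filter_not (s := range (N - 1)) (· ∈ s.map Fin.valEmbedding)
    rw [hs, card_map, card_range] at this
    rw [missingGapsBelow, Nat.count_eq_card_filter_range]
    omega
  rw [← Nat.card_range_of_injective index_injective, range_index, Nat.card_coe_set_eq, Set.ncard_coe_finset, card_range]
  omega

end SimpleGraph

namespace Finset

def disjSumEquiv (α β : Type*) : Finset α × Finset β ≃ Finset (α ⊕ β) where
  toFun st := st.1.disjSum st.2
  invFun u := (u.toLeft, u.toRight)
  left_inv _ := by simp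
  right_inv _ := toLeft_disjSum_toRight

noncomputable def sigmaEquiv {ι : Type*} (κ : ι → Type*) [Fintype ι] [DecidableEq ι] :
    (∀ i, Finset (κ i)) ≃ Finset (Σ i, κ i) where
  toFun S := univ.sigma S
  invFun A i := A.preimage (Sigma.mk i) sigma_mk_injective.injOn
  left_inv S := by funext i; ext; simp
  right_inv A := sigma_preimage_mk_of_subset A (subset_univ _)

lemma prod_range_ite_even {M : Type*} [CommMonoid M] (a b : M) (m : ℕ) :
    ∏ k ∈ range (2 * m + 1), (if Even k then a else b) = a ^ (m + 1) * b ^ m := by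
  induction m with
  | zero => simp
  | succ m ih =>
    have hodd : ¬Even (2 * m + 1) := Nat.not_even_bit1 m
    rw [show 2 * (m + 1) + 1 = 2 * m + 1 + 1 + 1 by ring, prod_range_succ, prod_range_succ, ih,
      if_neg hodd, if_pos (Nat.even_add_one.2 hodd), pow_succ a (m + 1), pow_succ b m]
    ac_rfl

end Finset

/-- The factor of a Tutte term contributed by a class of parallel non-loop edges of which `k`
are chosen: with none the gap stays open (`x - 1`); otherwise one edge closes it and the other
`k - 1` add to the nullity. -/
def parallelWeight (x y : ℝ) (k : ℕ) : ℝ :=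
  if k = 0 then x - 1 else (y - 1) ^ (k - 1)

lemma sum_parallelWeight_card (x y : ℝ) (m : ℕ) :
    ∑ s : Finset (Fin m), parallelWeight x y #s =
      ∑ k ∈ range (m + 1), m.choose k * parallelWeight x y k := by
  simpa using sum_powerset_apply_card (parallelWeight x y) (x := (univ : Finset (Fin m)))

lemma sum_sub_one_pow_card {β : Type*} [Fintype β] (y : ℝ) :
    ∑ L : Finset β, (y - 1) ^ #L = y ^ Fintype.card β := by
  simpa using Fintype.sum_pow_mul_eq_add_pow β (y - 1) 1

def occupiedGaps (n : ℕ) (A : Finset (grig n).Edge) : Finset (Fin (2 ^ n - 1)) :=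
  A.toLeft.image Sigma.fst

lemma exists_mem_inc_grig_iff {n : ℕ} {A : Finset (grig n).Edge} {u v : Fin (2 ^ n)}
    (huv : u ≠ v) :
    (∃ e ∈ A, (grig n).inc e = s(u, v)) ↔
      ∃ i ∈ occupiedGaps n A,
        ((i : ℕ) = u ∧ (i : ℕ) + 1 = v) ∨ ((i : ℕ) = v ∧ (i : ℕ) + 1 = u) := by
  constructor
  · rintro ⟨⟨i, j⟩ | w | j, hA, he⟩
    · refine ⟨i, mem_image_of_mem _ (mem_toLeft.2 hA), ?_⟩
      simpa [grig, leftV, rightV, Fin.ext_iff] using he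
    · exact absurd (Sym2.eq_iff.1 he) (by grind)
    · exact absurd (Sym2.eq_iff.1 he) (by grind)
  · rintro ⟨i, hi, h⟩
    obtain ⟨⟨i, j⟩, hA, rfl⟩ := mem_image.1 hi
    exact ⟨Sum.inl ⟨i, j⟩, mem_toLeft.1 hA, by simpa [grig, leftV, rightV, Fin.ext_iff] using h⟩

lemma toSimple_grig (n : ℕ) (A : Finset (grig n).Edge) :
    (grig n).toSimple A = SimpleGraph.pathSubgraph (2 ^ n) (occupiedGaps n A) := by
  ext u v
  simp only [Multigraph.toSimple, SimpleGraph.pathSubgraph, SimpleGraph.fromRel_adj]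
  refine and_congr_right fun huv => ?_
  rw [exists_mem_inc_grig_iff huv, exists_mem_inc_grig_iff huv.symm]
  grind

lemma rk_grig (n : ℕ) (A : Finset (grig n).Edge) : (grig n).rk A = #(occupiedGaps n A) := by
  have hcomps : (grig n).comps A = 2 ^ n - #(occupiedGaps n A) := by
    rw [Multigraph.comps, toSimple_grig,
      SimpleGraph.card_connectedComponent_pathSubgraph (by positivity)]
  have hle : #(occupiedGaps n A) ≤ 2 ^ n - 1 := by simpa using card_le_univ (occupiedGaps n A)
  rw [Multigraph.rk, hcomps, Fintype.card_fin]
  omega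

lemma occupiedGaps_univ (n : ℕ) : occupiedGaps n univ = univ := by
  refine eq_univ_of_forall fun i => mem_image.2 ⟨⟨i, ⟨0, ?_⟩⟩, mem_toLeft.2 (mem_univ _), rfl⟩
  split <;> omega

noncomputable def grigEdgeFinsetEquiv (n : ℕ) :
    (∀ i : Fin (2 ^ n - 1), Finset (Fin (if Even (i : ℕ) then 1 else 2))) ×
      Finset (Fin (2 ^ n) ⊕ Fin 4) ≃ Finset (grig n).Edge :=
  ((sigmaEquiv _).prodCongr (Equiv.refl _)).trans (disjSumEquiv _ _)

lemma grigEdgeFinsetEquiv_apply (n : ℕ)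
    (SL : (∀ i : Fin (2 ^ n - 1), Finset (Fin (if Even (i : ℕ) then 1 else 2))) ×
      Finset (Fin (2 ^ n) ⊕ Fin 4)) :
    grigEdgeFinsetEquiv n SL = (univ.sigma SL.1).disjSum SL.2 :=
  rfl

lemma tutte_term_grig (n : ℕ) (x y : ℝ)
    (S : ∀ i : Fin (2 ^ n - 1), Finset (Fin (if Even (i : ℕ) then 1 else 2)))
    (L : Finset (Fin (2 ^ n) ⊕ Fin 4)) :
    (x - 1) ^ ((grig n).rk univ - (grig n).rk (grigEdgeFinsetEquiv n (S, L))) *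
        (y - 1) ^ (grig n).nullity (grigEdgeFinsetEquiv n (S, L)) =
      (∏ i, parallelWeight x y #(S i)) * (y - 1) ^ #L := by
  set occ : Finset (Fin (2 ^ n - 1)) := {i | ¬#(S i) = 0}
  have hocc : occupiedGaps n (grigEdgeFinsetEquiv n (S, L)) = occ := by
    ext i
    simp [grigEdgeFinsetEquiv_apply, occupiedGaps, occ, eq_empty_iff_forall_notMem]
  have hcard : #(grigEdgeFinsetEquiv n (S, L)) = ∑ i, #(S i) + #L :=
    (card_disjSum (univ.sigma S) L).trans (by rw [card_sigma])
  have hempty : #({i | #(S i) = 0} : Finset _) + #occ = 2 ^ n - 1 := by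
    rw [card_filter_add_card_filter_not, card_univ, Fintype.card_fin]
  have hsum : ∑ i ∈ occ, (#(S i) - 1) + #occ = ∑ i, #(S i) := by
    rw [card_eq_sum_ones, ← sum_add_distrib, ← sum_filter_ne_zero (s := univ)]
    refine sum_congr rfl fun i hi => ?_
    exact Nat.sub_add_cancel (Nat.one_le_iff_ne_zero.2 (mem_filter.1 hi).2)
  rw [Multigraph.nullity, rk_grig, rk_grig, occupiedGaps_univ, hocc, card_univ, Fintype.card_fin,
    hcard]
  simp only [parallelWeight]
  rw [prod_ite, prod_const, prod_pow_eq_pow_sum, show 2 ^ n - 1 - #occ = #{i | #(S i) = 0} by omega,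
    show ∑ i, #(S i) + #L - #occ = ∑ i ∈ occ, (#(S i) - 1) + #L by omega, pow_add]
  ring

lemma tutte_grig_eq_prod (n : ℕ) (x y : ℝ) :
    (grig n).tutte x y =
      (∏ i : Fin (2 ^ n - 1), if Even (i : ℕ) then x else x + y) * y ^ (2 ^ n + 4) := by
  rw [Multigraph.tutte, powerset_univ, ← (grigEdgeFinsetEquiv n).sum_comp, Fintype.sum_prod_type]
  simp only [tutte_term_grig]
  rw [← Fintype.sum_mul_sum, sum_sub_one_pow_card]
  congr 1
  · refine (Fintype.prod_sum fun i s => parallelWeight x y #s).symm.trans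
      (prod_congr rfl fun i _ => ?_)
    rw [sum_parallelWeight_card]
    split_ifs
    · simp [sum_range_succ, parallelWeight]
    · simp [sum_range_succ, parallelWeight]
      ring
  · simp

/-- For each `n ≥ 1`, the Tutte polynomial of the Schreier graph
`Γ_n` of the Grigorchuk group is
`T_n(x, y) = y^(2^n + 4) · x^(2^(n-1)) · (y + x)^(2^(n-1) - 1)`. -/
theorem tutte_grig (n : ℕ) (hn : 1 ≤ n) (x y : ℝ) :
    (grig n).tutte x y =
      y ^ (2 ^ n + 4) * x ^ (2 ^ (n - 1)) * (y + x) ^ (2 ^ (n - 1) - 1) := by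
  obtain ⟨m, rfl⟩ : ∃ m, n = m + 1 := ⟨n - 1, by omega⟩
  have hgaps : 2 ^ (m + 1) - 1 = 2 * (2 ^ m - 1) + 1 := by
    have := Nat.one_le_two_pow (n := m)
    rw [pow_succ]
    omega
  rw [tutte_grig_eq_prod, Fin.prod_univ_eq_prod_range (fun k => if Even k then x else x + y), hgaps,
    prod_range_ite_even, Nat.add_sub_cancel, Nat.sub_add_cancel Nat.one_le_two_pow]
  ring
end

section
/- For each n ≥ 1, the number of spanning forests of the Schreier graph Γ_n of the Grigorchuk group is 2^{2^{n−1}} · 3^{2^{n−1} − 1}. -/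
/-!
A spanning forest of `Γ_n` contains no loop and at most one edge of each double edge. Conversely
every such edge set is a forest: a spanning subgraph of the path on `2^n` vertices using `s` of
its edges has `2^n - s` components. A forest is therefore an independent choice, at each gap of
the path, of no edge or of one of its parallel edges: `2` choices at each of the `2^(n-1)` bridges
and `3` at each of the `2^(n-1) - 1` double edges.
-/

namespace SimpleGraph

open Finset

def partialPathGraph (N : ℕ) (S : Finset ℕ) : SimpleGraph (Fin N) :=
  fromRel fun u v => u.val + 1 = v.val ∧ u.val ∈ S

namespace partialPathGraph

variable {N : ℕ} {S : Finset ℕ}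

/-- The least `j ≤ k` with `j, …, k - 1 ∈ S`: the left end of the block of `k` in
`partialPathGraph N S`. -/
def leftEnd (S : Finset ℕ) : ℕ → ℕ
  | 0 => 0
  | k + 1 => if k ∈ S then leftEnd S k else k + 1

lemma leftEnd_le (k : ℕ) : leftEnd S k ≤ k := by
  induction k with
  | zero => rfl
  | succ k ih => unfold leftEnd; split_ifs <;> omega

lemma leftEnd_leftEnd (k : ℕ) : leftEnd S (leftEnd S k) = leftEnd S k := by
  induction k with
  | zero => rfl
  | succ k ih =>
    by_cases h : k ∈ S
    · rw [leftEnd.eq_2, if_pos h, ih]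
    · rw [leftEnd.eq_2, if_neg h, leftEnd.eq_2, if_neg h]

lemma leftEnd_succ_eq_self_iff {k : ℕ} : leftEnd S (k + 1) = k + 1 ↔ k ∉ S := by
  by_cases h : k ∈ S
  · simpa [leftEnd, h] using ((leftEnd_le (S := S) k).trans_lt k.lt_succ_self).ne
  · simp [leftEnd, h]

lemma leftEnd_eq_of_adj {u v : Fin N} (h : (partialPathGraph N S).Adj u v) :
    leftEnd S u = leftEnd S v := by
  obtain ⟨-, ⟨huv, hu⟩ | ⟨hvu, hv⟩⟩ := h
  · rw [← huv, leftEnd, if_pos hu]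
  · rw [← hvu, leftEnd, if_pos hv]

lemma leftEnd_lt (v : Fin N) : leftEnd S v < N := (leftEnd_le _).trans_lt v.isLt

lemma reachable_leftEnd (v : Fin N) :
    (partialPathGraph N S).Reachable v ⟨leftEnd S v, leftEnd_lt v⟩ := by
  obtain ⟨k, hk⟩ := v
  induction k with
  | zero => rfl
  | succ k ih =>
    by_cases hkS : k ∈ S
    · have hadj : (partialPathGraph N S).Adj ⟨k + 1, hk⟩ ⟨k, by omega⟩ :=
        ⟨by simp, Or.inr ⟨rfl, hkS⟩⟩
      simpa only [leftEnd, if_pos hkS] using hadj.reachable.trans (ih (by omega))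
    · simp only [leftEnd, if_neg hkS]
      rfl

lemma leftEnd_eq_of_reachable {u v : Fin N} (h : (partialPathGraph N S).Reachable u v) :
    leftEnd S u = leftEnd S v := by
  obtain ⟨w⟩ := h
  induction w with
  | nil => rfl
  | cons hadj _ ih => exact (leftEnd_eq_of_adj hadj).trans ih

def connectedComponentEquiv :
    (partialPathGraph N S).ConnectedComponent ≃ {v : Fin N // leftEnd S v = v} where
  toFun := ConnectedComponent.lift
    (fun v => ⟨⟨leftEnd S v, leftEnd_lt v⟩, leftEnd_leftEnd _⟩)
    fun _ _ p _ => Subtype.ext (Fin.ext (leftEnd_eq_of_reachable ⟨p⟩))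
  invFun v := (partialPathGraph N S).connectedComponentMk v
  left_inv c := c.ind fun v => ConnectedComponent.sound (reachable_leftEnd v).symm
  right_inv v := Subtype.ext (Fin.ext v.2)

lemma card_not_leftEnd_eq_self (hS : S ⊆ range (N - 1)) :
    Fintype.card {v : Fin N // leftEnd S v ≠ v} = #S := by
  rw [← Fintype.card_coe S]
  refine Fintype.card_congr
    { toFun v := ⟨v.1 - 1, ?_⟩
      invFun k := ⟨⟨k + 1, ?_⟩, leftEnd_succ_eq_self_iff.not.mpr (not_not.mpr k.2)⟩
      left_inv v := ?_
      right_inv k := by simp }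
  · obtain ⟨⟨_ | k, _⟩, hv⟩ := v
    · exact absurd rfl hv
    · simpa using leftEnd_succ_eq_self_iff.not.mp hv
  · have := mem_range.mp (hS k.2)
    omega
  · obtain ⟨⟨_ | k, _⟩, hv⟩ := v
    · exact absurd rfl hv
    · rfl

theorem card_connectedComponent (hS : S ⊆ range (N - 1)) :
    Nat.card (partialPathGraph N S).ConnectedComponent = N - #S := by
  rw [Nat.card_congr connectedComponentEquiv, Nat.card_eq_fintype_card,
    ← card_not_leftEnd_eq_self hS, Fintype.card_subtype_compl, Fintype.card_fin]
  have := Fintype.card_subtype_le fun v : Fin N => leftEnd S v = v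
  rw [Fintype.card_fin] at this
  omega

end partialPathGraph

end SimpleGraph

namespace Finset

variable {ι : Type*} [Fintype ι] [DecidableEq ι] {F : ι → Type*} [∀ i, Fintype (F i)]
  [∀ i, DecidableEq (F i)]

noncomputable def injOnSigmaFstEquiv :
    {B : Finset (Σ i, F i) // Set.InjOn Sigma.fst (B : Set (Σ i, F i))} ≃
      ∀ i, Option (F i) where
  toFun B i := open Classical in
    if h : ∃ x, ⟨i, x⟩ ∈ B.1 then some h.choose else none
  invFun f := ⟨univ.filter fun p => f p.1 = some p.2, by
    rintro ⟨i, x⟩ hx ⟨j, y⟩ hy (rfl : i = j)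
    simp only [coe_filter, mem_univ, true_and, Set.mem_ofPred_eq] at hx hy
    rw [Option.some_inj.mp (hx.symm.trans hy)]⟩
  left_inv B := by
    obtain ⟨B, hB⟩ := B
    ext ⟨i, x⟩
    simp only [mem_filter, mem_univ, true_and]
    split_ifs with h
    · have hx : h.choose = x ↔ ⟨i, x⟩ ∈ B :=
        ⟨fun hx => hx ▸ h.choose_spec, fun hx => sigma_mk_injective (hB h.choose_spec hx rfl)⟩
      simpa using hx
    · simpa using fun hx => h ⟨x, hx⟩
  right_inv f := by
    funext i
    simp only [mem_filter, mem_univ, true_and]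
    split_ifs with h
    · exact h.choose_spec.symm
    · cases hf : f i with
      | none => rfl
      | some x => exact absurd ⟨x, hf⟩ h

theorem card_injOn_sigmaFst :
    Nat.card {B : Finset (Σ i, F i) // Set.InjOn Sigma.fst (B : Set (Σ i, F i))} =
      ∏ i, (Fintype.card (F i) + 1) := by
  rw [Nat.card_congr injOnSigmaFstEquiv, Nat.card_eq_fintype_card, Fintype.card_pi]
  simp

end Finset

namespace grig

open Finset SimpleGraph

variable {n : ℕ}

abbrev GapEdge (n : ℕ) : Type := Σ i : Fin (2 ^ n - 1), Fin (if Even i.val then 1 else 2)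

/-- `(grig n).Edge` unfolds to this type only at default transparency, which `rw` does not
see through. -/
abbrev Edge (n : ℕ) : Type := GapEdge n ⊕ (Fin (2 ^ n) ⊕ Fin 4)

variable {A : Finset (Edge n)}

def gaps (A : Finset (Edge n)) : Finset (Fin (2 ^ n - 1)) := A.toLeft.image Sigma.fst

lemma exists_mem_inc_eq_iff {u v : Fin (2 ^ n)} (huv : u ≠ v) :
    (∃ e ∈ A, (grig n).inc e = s(u, v)) ↔
      ∃ i ∈ gaps A, s(leftV n i, rightV n i) = s(u, v) := by
  constructor
  · rintro ⟨⟨i, m⟩ | w | j, he, hinc⟩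
    · exact ⟨i, mem_image.mpr ⟨⟨i, m⟩, mem_toLeft.mpr he, rfl⟩, hinc⟩
    · exact absurd (Sym2.eq_iff.mp hinc) (by grind)
    · exact absurd (Sym2.eq_iff.mp hinc) (by grind)
  · rintro ⟨i, hi, hinc⟩
    obtain ⟨⟨i, m⟩, he, rfl⟩ := mem_image.mp hi
    exact ⟨_, mem_toLeft.mp he, hinc⟩

lemma toSimple_eq :
    (grig n).toSimple A = partialPathGraph (2 ^ n) ((gaps A).map Fin.valEmbedding) := by
  ext u v
  simp only [Multigraph.toSimple, partialPathGraph, fromRel_adj, Sym2.eq_swap (a := v)]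
  refine and_congr_right fun huv => ?_
  rw [or_self]
  refine (exists_mem_inc_eq_iff huv).trans ?_
  simp only [leftV, rightV, Sym2.eq_iff, Fin.ext_iff, mem_map, Fin.valEmbedding_apply]
  grind

lemma comps_eq : (grig n).comps A = 2 ^ n - #(gaps A) := by
  change Nat.card ((grig n).toSimple A).ConnectedComponent = _
  rw [toSimple_eq, partialPathGraph.card_connectedComponent, card_map]
  intro k hk
  obtain ⟨i, -, rfl⟩ := mem_map.mp hk
  exact mem_range.mpr i.isLt

lemma isForest_iff :
    A.card + (grig n).comps A = Fintype.card (Fin (2 ^ n)) ↔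
      A.toRight = ∅ ∧ Set.InjOn Sigma.fst (A.toLeft : Set (GapEdge n)) := by
  have h_gaps_le_left : #(gaps A) ≤ #A.toLeft := card_image_le
  have h_gaps_le : #(gaps A) ≤ 2 ^ n - 1 := (card_le_univ _).trans_eq (Fintype.card_fin _)
  have h_pos : 1 ≤ 2 ^ n := Nat.one_le_two_pow
  rw [comps_eq, Fintype.card_fin, ← card_toLeft_add_card_toRight, ← card_eq_zero,
    ← card_image_iff, ← gaps]
  omega

def forestEquiv :
    {A : Finset (Edge n) // A.card + (grig n).comps A = Fintype.card (Fin (2 ^ n))} ≃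
      {B : Finset (GapEdge n) // Set.InjOn Sigma.fst (B : Set (GapEdge n))} where
  toFun A := ⟨A.1.toLeft, (isForest_iff.mp A.2).2⟩
  invFun B :=
    ⟨B.1.disjSum ∅, isForest_iff.mpr ⟨toRight_disjSum, by rw [toLeft_disjSum]; exact B.2⟩⟩
  left_inv A := Subtype.ext <| by
    change A.1.toLeft.disjSum ∅ = A.1
    rw [← (isForest_iff.mp A.2).1, toLeft_disjSum_toRight]
  right_inv B := Subtype.ext toLeft_disjSum

end grig

lemma Finset.prod_range_two_mul_add_one_ite_even (k : ℕ) :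
    ∏ i ∈ Finset.range (2 * k + 1), (if Even i then 2 else 3) = 2 ^ (k + 1) * 3 ^ k := by
  induction k with
  | zero => simp
  | succ k ih =>
    rw [show 2 * (k + 1) + 1 = 2 * k + 1 + 1 + 1 by ring, Finset.prod_range_succ,
      Finset.prod_range_succ, ih]
    simp only [Nat.not_even_bit1, ↓reduceIte, Nat.even_add_one, not_false_eq_true]
    ring

/-- For each `n ≥ 1`, the number of spanning forests of the
Schreier graph `Γ_n` of the Grigorchuk group is `2^(2^(n-1)) · 3^(2^(n-1) - 1)`. -/
theorem forestCount_grig (n : ℕ) (hn : 1 ≤ n) :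
    (grig n).forestCount = 2 ^ (2 ^ (n - 1)) * 3 ^ (2 ^ (n - 1) - 1) := by
  obtain ⟨k, rfl⟩ : ∃ k, n = k + 1 := ⟨n - 1, by omega⟩
  have h_gaps : 2 ^ (k + 1) - 1 = 2 * (2 ^ k - 1) + 1 := by
    have := Nat.one_le_two_pow (n := k)
    rw [pow_succ]
    omega
  calc (grig (k + 1)).forestCount
      = Nat.card {B : Finset (grig.GapEdge (k + 1)) //
          Set.InjOn Sigma.fst (B : Set (grig.GapEdge (k + 1)))} :=
        Nat.card_congr grig.forestEquiv
    _ = ∏ i : Fin (2 ^ (k + 1) - 1), (if Even i.val then 2 else 3) := by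
        rw [Finset.card_injOn_sigmaFst]
        congr with i
        split_ifs <;> simp
    _ = ∏ i ∈ Finset.range (2 ^ (k + 1) - 1), (if Even i then 2 else 3) :=
        Fin.prod_univ_eq_prod_range (fun i => if Even i then 2 else 3) _
    _ = 2 ^ (2 ^ (k + 1 - 1)) * 3 ^ (2 ^ (k + 1 - 1) - 1) := by
        rw [h_gaps, Finset.prod_range_two_mul_add_one_ite_even,
          Nat.sub_add_cancel Nat.one_le_two_pow, Nat.add_sub_cancel]
end

section
/- For each n ≥ 1, the number of acyclic orientations of the loopless Schreier graph Γ_n* of the Grigorchuk group is 2^{2^n − 1}. -/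
/-- The loopless level-`n` Schreier graph `Γ_n*` of the Grigorchuk group: `Γ_n`
with all loops deleted, i.e. the path-shaped cactus on `2^n` vertices alternating
`2^(n-1)` bridges and `2^(n-1) - 1` cycles of length two. -/
def grigStar (n : ℕ) : Multigraph (Fin (2 ^ n)) where
  Edge := Σ i : Fin (2 ^ n - 1), Fin (if Even i.val then 1 else 2)
  fintypeEdge := inferInstance
  decEqEdge := inferInstance
  inc := fun e => s(leftV n e.1, rightV n e.1)

/-!
In an acyclic orientation, parallel edges point the same way (otherwise they form a directed
2-cycle), so an acyclic orientation of `Γ_n*` is determined by one direction for each of the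
`2^n - 1` gaps between consecutive vertices. Conversely every choice of directions is acyclic:
the signed count of forward gaps to the left of a vertex strictly increases along every arc.
-/

theorem Relation.not_transGen_self_of_lt {α β : Type*} [Preorder β] {r : α → α → Prop}
    (f : α → β) (hf : ∀ a b, r a b → f a < f b) (a : α) : ¬ Relation.TransGen r a a := by
  intro h
  have hlt := h.lift f hf
  rw [Relation.transGen_eq_self] at hlt
  exact lt_irrefl _ hlt

namespace Multigraph

variable {V : Type} {G : Multigraph V} {σ : G.Edge → V × V}

theorem IsOrientation.eq_or_eq_swap (hσ : G.IsOrientation σ) {e : G.Edge} {a b : V}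
    (he : G.inc e = s(a, b)) : σ e = (a, b) ∨ σ e = (b, a) := by
  have h := (hσ e).trans he
  rw [Sym2.eq_iff] at h
  rcases h with ⟨h1, h2⟩ | ⟨h1, h2⟩
  · exact Or.inl (Prod.ext h1 h2)
  · exact Or.inr (Prod.ext h1 h2)

theorem IsOrientation.eq_of_inc_eq (hσ : G.IsOrientation σ)
    (hacyc : ∀ v, ¬ Relation.TransGen (fun u w => ∃ e, σ e = (u, w)) v v)
    {e e' : G.Edge} (h : G.inc e = G.inc e') : σ e = σ e' := by
  rcases hσ' : σ e with ⟨x, y⟩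
  have he' : G.inc e' = s(x, y) := by rw [← h, ← hσ e, hσ']
  rcases hσ.eq_or_eq_swap he' with h' | h'
  · exact h'.symm
  · exact absurd (.head ⟨e, hσ'⟩ (.single ⟨e', h'⟩)) (hacyc x)

end Multigraph

theorem leftV_ne_rightV {n : ℕ} (i : Fin (2 ^ n - 1)) : leftV n i ≠ rightV n i := by
  simp [leftV, rightV, Fin.ext_iff]

/-- The arc across the `i`-th gap, pointing right iff `b`. -/
def gapArc (n : ℕ) (b : Bool) (i : Fin (2 ^ n - 1)) : Fin (2 ^ n) × Fin (2 ^ n) :=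
  cond b (leftV n i, rightV n i) (rightV n i, leftV n i)

theorem gapArc_eq_iff {n : ℕ} (b : Bool) (i : Fin (2 ^ n - 1)) :
    gapArc n b i = (leftV n i, rightV n i) ↔ b = true := by
  cases b <;> simp [gapArc, (leftV_ne_rightV i).symm]

theorem eq_gapArc_of_isOrientation {n : ℕ} {σ : (grigStar n).Edge → Fin (2 ^ n) × Fin (2 ^ n)}
    (hσ : (grigStar n).IsOrientation σ) (e : (grigStar n).Edge) :
    σ e = gapArc n (σ e = (leftV n e.1, rightV n e.1)) e.1 := by
  rcases hσ.eq_or_eq_swap (rfl : (grigStar n).inc e = _) with h | h <;>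
    simp [h, gapArc, (leftV_ne_rightV e.1).symm]

def gapEdge (n : ℕ) (i : Fin (2 ^ n - 1)) : (grigStar n).Edge :=
  ⟨i, ⟨0, by split <;> omega⟩⟩

def orientationOfDirs (n : ℕ) (f : Fin (2 ^ n - 1) → Bool) :
    (grigStar n).Edge → Fin (2 ^ n) × Fin (2 ^ n) :=
  fun e => gapArc n (f e.1) e.1

theorem isOrientation_orientationOfDirs {n : ℕ} (f : Fin (2 ^ n - 1) → Bool) :
    (grigStar n).IsOrientation (orientationOfDirs n f) := by
  intro e
  change s((gapArc n (f e.1) e.1).1, (gapArc n (f e.1) e.1).2) = s(leftV n e.1, rightV n e.1)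
  cases f e.1
  · exact Sym2.eq_swap
  · rfl

/-- `+1` for each gap to the left of `v` directed rightwards, `-1` for each directed leftwards. -/
def gapPotential {n : ℕ} (f : Fin (2 ^ n - 1) → Bool) (v : Fin (2 ^ n)) : ℤ :=
  ∑ i ∈ Finset.range v, if h : i < 2 ^ n - 1 then cond (f ⟨i, h⟩) 1 (-1) else 0

theorem gapPotential_rightV {n : ℕ} (f : Fin (2 ^ n - 1) → Bool) (i : Fin (2 ^ n - 1)) :
    gapPotential f (rightV n i) = gapPotential f (leftV n i) + cond (f i) 1 (-1) := by
  simp only [gapPotential, rightV, leftV, Finset.sum_range_succ, dif_pos i.isLt]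

theorem gapPotential_lt_of_orientationOfDirs_eq {n : ℕ} {f : Fin (2 ^ n - 1) → Bool}
    {e : (grigStar n).Edge} {u w : Fin (2 ^ n)} (h : orientationOfDirs n f e = (u, w)) :
    gapPotential f u < gapPotential f w := by
  have hstep := gapPotential_rightV f e.1
  simp only [orientationOfDirs, gapArc] at h
  cases hf : f e.1 <;> simp only [hf, cond_true, cond_false, Prod.mk.injEq] at h hstep <;>
    obtain ⟨rfl, rfl⟩ := h <;> omega

theorem not_transGen_orientationOfDirs {n : ℕ} (f : Fin (2 ^ n - 1) → Bool) (v : Fin (2 ^ n)) :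
    ¬ Relation.TransGen (fun u w => ∃ e, orientationOfDirs n f e = (u, w)) v v :=
  Relation.not_transGen_self_of_lt (gapPotential f)
    (fun _ _ ⟨_, h⟩ => gapPotential_lt_of_orientationOfDirs_eq h) v

def acyclicOrientationsEquivDirs (n : ℕ) :
    {σ : (grigStar n).Edge → Fin (2 ^ n) × Fin (2 ^ n) //
      (grigStar n).IsOrientation σ ∧
      ∀ v, ¬ Relation.TransGen (fun u w => ∃ e, σ e = (u, w)) v v} ≃
    (Fin (2 ^ n - 1) → Bool) where
  toFun σ i := σ.1 (gapEdge n i) = (leftV n i, rightV n i)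
  invFun f := ⟨orientationOfDirs n f, isOrientation_orientationOfDirs f,
    not_transGen_orientationOfDirs f⟩
  left_inv := by
    rintro ⟨σ, hσ, hacyc⟩
    ext1
    funext e
    calc gapArc n (σ (gapEdge n e.1) = (leftV n e.1, rightV n e.1)) e.1
        = σ (gapEdge n e.1) := (eq_gapArc_of_isOrientation hσ (gapEdge n e.1)).symm
      _ = σ e := hσ.eq_of_inc_eq hacyc rfl
  right_inv f := by
    funext i
    simp [orientationOfDirs, gapEdge, gapArc_eq_iff]

theorem acyclicOrientationCount_grigStar_general (n : ℕ) :
    (grigStar n).acyclicOrientationCount = 2 ^ (2 ^ n - 1) := by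
  rw [Multigraph.acyclicOrientationCount, Nat.card_congr (acyclicOrientationsEquivDirs n),
    Nat.card_eq_fintype_card, Fintype.card_fun, Fintype.card_bool, Fintype.card_fin]

/-- For each `n ≥ 1`, the number of acyclic orientations of the
loopless Schreier graph `Γ_n*` of the Grigorchuk group is `2^(2^n - 1)`. -/
theorem acyclicOrientationCount_grigStar (n : ℕ) (hn : 1 ≤ n) :
    (grigStar n).acyclicOrientationCount = 2 ^ (2 ^ n - 1) :=
  acyclicOrientationCount_grigStar_general n
end
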